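/- arXiv:2405.08730 — 5 statements merged into one kernel-verified Lean document; each statement's English description precedes it below -/
import Mathlib

section
/- Let F be a real matrix with rows indexed by the quadruples (i,i',j,j') (i < i', j < j') and columns indexed by a finite set of treatment effects, such that ker(Aᵀ) ⊆ ker(Fᵀ). Let v be a vector indexed by the effects and suppose there exists w₀ with Fᵀ w₀ = v. Then the set of observation-weight vectors of unbiased estimators, S = {Aᵀ w : Fᵀ w = v} ⊆ ℝ^(N×J), is the affine coset (Aᵀ w₀) + L, where L = Aᵀ(ker(Fᵀ)) is a linear subspace of ℝ^(N×J) whose dimension equals (N−1)(J−1) − rank(F). -/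
/-!
The unbiased weight vectors are the image under `Aᵀ` of the affine space `Fᵀ w = v`, hence the
coset `Aᵀ w₀ + Aᵀ (ker Fᵀ)`. Since `ker Aᵀ ≤ ker Fᵀ`, rank–nullity for `Aᵀ` restricted to `ker Fᵀ`
gives `dim Aᵀ (ker Fᵀ) = rank A - rank F`. Finally `ker A` consists of the two-way additive
outcomes `y (i, j) = a i + b j`, a space of dimension `N + J - 1`, so `rank A = (N - 1) (J - 1)`.
-/

open Matrix

/-- Quadruples (i,i',j,j') with i < i' and j < j'. -/
abbrev Quad (N J : ℕ) :=
  {q : (Fin N × Fin N) × (Fin J × Fin J) // q.1.1 < q.1.2 ∧ q.2.1 < q.2.2}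

/-- The matrix of all two-by-two DID estimators: the row indexed by (i,i',j,j')
has +1 in columns (i,j') and (i',j), −1 in columns (i,j) and (i',j'), 0 elsewhere. -/
def Amat (N J : ℕ) : Matrix (Quad N J) (Fin N × Fin J) ℝ :=
  Matrix.of fun q p =>
    (if p = (q.val.1.1, q.val.2.2) then (1 : ℝ) else 0)
      + (if p = (q.val.1.2, q.val.2.1) then 1 else 0)
      - (if p = (q.val.1.1, q.val.2.1) then 1 else 0)
      - (if p = (q.val.1.2, q.val.2.2) then 1 else 0)

open LinearMap Module

section Coset

variable {R V W U : Type*} [Ring R] [AddCommGroup V] [Module R V] [AddCommGroup W] [Module R W]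
  [AddCommGroup U] [Module R U]

theorem image_fiber_eq_coset (A : V →ₗ[R] W) (F : V →ₗ[R] U) {v : U} {w₀ : V} (hw₀ : F w₀ = v) :
    {u | ∃ w, F w = v ∧ u = A w} = {u | ∃ x ∈ (ker F).map A, u = A w₀ + x} := by
  ext u
  constructor
  · rintro ⟨w, rfl, rfl⟩
    exact ⟨A (w - w₀), ⟨w - w₀, by simp [hw₀], rfl⟩, by simp⟩
  · rintro ⟨-, ⟨z, hz, rfl⟩, rfl⟩
    exact ⟨w₀ + z, by simp_all, by simp⟩

end Coset

theorem finrank_map_ker_of_ker_le {K V W U : Type*} [Field K] [AddCommGroup V] [Module K V]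
    [FiniteDimensional K V] [AddCommGroup W] [Module K W] [AddCommGroup U] [Module K U]
    (A : V →ₗ[K] W) (F : V →ₗ[K] U) (h : ker A ≤ ker F) :
    finrank K ((ker F).map A) = finrank K (range A) - finrank K (range F) := by
  have hrestrict := finrank_range_add_finrank_ker (A.domRestrict (ker F))
  rw [range_domRestrict, ker_domRestrict, (Submodule.comapSubtypeEquivOfLe h).finrank_eq]
    at hrestrict
  have hA := finrank_range_add_finrank_ker A
  have hF := finrank_range_add_finrank_ker F
  omega

section OuterSum

variable (R ι κ : Type*) [CommRing R]

def outerSum : (ι → R) × (κ → R) →ₗ[R] (ι × κ → R) :=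
  funLeft R R Prod.fst ∘ₗ fst R _ _ + funLeft R R Prod.snd ∘ₗ snd R _ _

variable {R ι κ}

@[simp]
theorem outerSum_apply (ab : (ι → R) × (κ → R)) (p : ι × κ) :
    outerSum R ι κ ab p = ab.1 p.1 + ab.2 p.2 :=
  rfl

theorem ker_outerSum [Nonempty ι] [Nonempty κ] :
    ker (outerSum R ι κ) = R ∙ ((1, -1) : (ι → R) × (κ → R)) := by
  ext ab
  rw [mem_ker, Submodule.mem_span_singleton]
  constructor
  · intro h
    have hab : ∀ i j, ab.1 i + ab.2 j = 0 := fun i j => congrFun h (i, j)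
    obtain ⟨i₀⟩ := ‹Nonempty ι›
    obtain ⟨j₀⟩ := ‹Nonempty κ›
    refine ⟨ab.1 i₀, Prod.ext (funext fun i => ?_) (funext fun j => ?_)⟩
    · simp only [Prod.smul_fst, Pi.smul_apply, Pi.one_apply, smul_eq_mul, mul_one]
      linear_combination hab i₀ j₀ - hab i j₀
    · simp only [Prod.smul_snd, Pi.smul_apply, Pi.neg_apply, Pi.one_apply, smul_eq_mul,
        mul_neg, mul_one]
      linear_combination -hab i₀ j
  · rintro ⟨c, rfl⟩
    funext p
    simp

theorem finrank_range_outerSum {K : Type*} [Field K] [Fintype ι] [Fintype κ] [Nonempty ι]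
    [Nonempty κ] :
    finrank K (range (outerSum K ι κ)) = Fintype.card ι + Fintype.card κ - 1 := by
  have hne : ((1, -1) : (ι → K) × (κ → K)) ≠ 0 := fun h => by
    simpa using congrFun (congrArg Prod.fst h) (Classical.arbitrary ι)
  have := finrank_range_add_finrank_ker (outerSum K ι κ)
  rw [ker_outerSum, finrank_span_singleton hne, finrank_prod, finrank_fintype_fun_eq_card,
    finrank_fintype_fun_eq_card] at this
  omega

end OuterSum

section DiD

variable {N J : ℕ}

theorem Amat_mulVec_apply (y : Fin N × Fin J → ℝ) (q : Quad N J) :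
    (Amat N J *ᵥ y) q = y (q.val.1.1, q.val.2.2) + y (q.val.1.2, q.val.2.1)
      - y (q.val.1.1, q.val.2.1) - y (q.val.1.2, q.val.2.2) := by
  simp [Amat, mulVec, dotProduct, sub_mul, add_mul, ite_mul, Finset.sum_add_distrib]

theorem ker_Amat [NeZero N] [NeZero J] :
    ker (Amat N J).mulVecLin = range (outerSum ℝ (Fin N) (Fin J)) := by
  ext y
  constructor
  · intro hy
    have hdid : ∀ q : Quad N J, y (q.val.1.1, q.val.2.2) + y (q.val.1.2, q.val.2.1)
        - y (q.val.1.1, q.val.2.1) - y (q.val.1.2, q.val.2.2) = 0 := fun q => by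
      rw [← Amat_mulVec_apply]; exact congrFun hy q
    refine ⟨(fun i => y (i, 0), fun j => y (0, j) - y (0, 0)), funext fun ⟨i, j⟩ => ?_⟩
    show y (i, 0) + (y (0, j) - y (0, 0)) = y (i, j)
    rcases eq_or_ne i 0 with rfl | hi
    · ring
    rcases eq_or_ne j 0 with rfl | hj
    · ring
    linarith [hdid ⟨((0, i), (0, j)), (Fin.pos_iff_ne_zero' i).mpr hi,
      (Fin.pos_iff_ne_zero' j).mpr hj⟩]
  · rintro ⟨ab, rfl⟩
    funext q
    rw [mulVecLin_apply, Amat_mulVec_apply]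
    simp only [outerSum_apply, Pi.zero_apply]
    ring

theorem rank_Amat : (Amat N J).rank = (N - 1) * (J - 1) := by
  obtain _ | n := N
  · simpa using (Amat 0 J).rank_le_card_width
  obtain _ | m := J
  · simpa using (Amat (n + 1) 0).rank_le_card_width
  have hrn := finrank_range_add_finrank_ker (Amat (n + 1) (m + 1)).mulVecLin
  rw [ker_Amat, finrank_range_outerSum, finrank_fintype_fun_eq_card] at hrn
  simp only [Fintype.card_prod, Fintype.card_fin] at hrn
  rw [Matrix.rank, Nat.add_sub_cancel, Nat.add_sub_cancel]
  ring_nf at hrn ⊢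
  omega

end DiD

theorem unbiased_weight_space_general
    (N J : ℕ)
    (Effects : Type) [Fintype Effects]
    (F : Matrix (Quad N J) Effects ℝ)
    (hker : LinearMap.ker (Matrix.mulVecLin (Amat N J)ᵀ) ≤
      LinearMap.ker (Matrix.mulVecLin Fᵀ))
    (v : Effects → ℝ) (w₀ : Quad N J → ℝ) (hw₀ : Fᵀ.mulVec w₀ = v) :
    ({u : Fin N × Fin J → ℝ | ∃ w : Quad N J → ℝ, Fᵀ.mulVec w = v ∧ u = (Amat N J)ᵀ.mulVec w}
        = {u : Fin N × Fin J → ℝ |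
            ∃ x ∈ Submodule.map (Matrix.mulVecLin (Amat N J)ᵀ)
              (LinearMap.ker (Matrix.mulVecLin Fᵀ)),
              u = (Amat N J)ᵀ.mulVec w₀ + x})
      ∧ Module.finrank ℝ
          (Submodule.map (Matrix.mulVecLin (Amat N J)ᵀ)
            (LinearMap.ker (Matrix.mulVecLin Fᵀ)))
        = (N - 1) * (J - 1) - F.rank := by
  refine ⟨image_fiber_eq_coset (Amat N J)ᵀ.mulVecLin Fᵀ.mulVecLin hw₀, ?_⟩
  rw [finrank_map_ker_of_ker_le _ _ hker, ← Matrix.rank, ← Matrix.rank, rank_transpose,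
    rank_transpose, rank_Amat]

/-- If ker(Aᵀ) ⊆ ker(Fᵀ) and Fᵀ w₀ = v is solvable, then the set of
observation-weight vectors of unbiased estimators, S = {Aᵀ w : Fᵀ w = v}, is the
affine coset (Aᵀ w₀) + L, where L = Aᵀ(ker Fᵀ) is a linear subspace of ℝ^(N×J)
of dimension (N−1)(J−1) − rank(F). -/
theorem unbiased_weight_space
    (N J : ℕ) (hN : 2 ≤ N) (hJ : 2 ≤ J)
    (Effects : Type) [Fintype Effects] [DecidableEq Effects]
    (F : Matrix (Quad N J) Effects ℝ)
    (hker : LinearMap.ker (Matrix.mulVecLin (Amat N J)ᵀ) ≤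
      LinearMap.ker (Matrix.mulVecLin Fᵀ))
    (v : Effects → ℝ) (w₀ : Quad N J → ℝ) (hw₀ : Fᵀ.mulVec w₀ = v) :
    ({u : Fin N × Fin J → ℝ | ∃ w : Quad N J → ℝ, Fᵀ.mulVec w = v ∧ u = (Amat N J)ᵀ.mulVec w}
        = {u : Fin N × Fin J → ℝ |
            ∃ x ∈ Submodule.map (Matrix.mulVecLin (Amat N J)ᵀ)
              (LinearMap.ker (Matrix.mulVecLin Fᵀ)),
              u = (Amat N J)ᵀ.mulVec w₀ + x})
      ∧ Module.finrank ℝ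
          (Submodule.map (Matrix.mulVecLin (Amat N J)ᵀ)
            (LinearMap.ker (Matrix.mulVecLin Fᵀ)))
        = (N - 1) * (J - 1) - F.rank :=
  unbiased_weight_space_general N J Effects F hker v w₀ hw₀
end

section
/- (Type 2: switch vs. always-untreated.) Under consistency, no anticipation, no spillover at the level of means, staggered adoption, and parallel trends, if units i, i' and periods j, j' satisfy j < T(i) ≤ j' < T(i'), then the expected two-by-two DID equals the treatment effect of unit i in period j': E[D_{i,i',j,j'}] = θ(i,j'). -/
/-!
Parallel trends makes the control-mean trends of the two units cancel, so the expected DID is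
the change in the treated contributions `θ * X` of unit `i` minus that of unit `i'`. Under staggered
adoption with `j < T i ≤ j' < T i'`, the only treated cell among the four is `(i, j')`.
-/

theorem did_eq_sub_treated_contributions {ι τ : Type*} {m0 θ X μ : ι → τ → ℝ}
    (hμ : ∀ i j, μ i j = m0 i j + θ i j * X i j)
    (hPT : ∀ i i' j j', m0 i j' - m0 i j = m0 i' j' - m0 i' j) (i i' : ι) (j j' : τ) :
    (μ i j' - μ i j) - (μ i' j' - μ i' j) =
      (θ i j' * X i j' - θ i j * X i j) - (θ i' j' * X i' j' - θ i' j * X i' j) := by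
  simp only [hμ]
  linarith [hPT i i' j j']

theorem expn_did_type2_general
    (m0 θ X μ : ℕ → ℕ → ℝ) (T : ℕ → ℕ) (ED : ℕ → ℕ → ℕ → ℕ → ℝ)
    (hX : ∀ i j, X i j = if T i ≤ j then 1 else 0)
    (hμ : ∀ i j, μ i j = m0 i j + θ i j * X i j)
    (hED : ∀ i i' j j', ED i i' j j' = (μ i j' - μ i j) - (μ i' j' - μ i' j))
    (hPT : ∀ i i' j j', m0 i j' - m0 i j = m0 i' j' - m0 i' j)
    (i i' j j' : ℕ)
    (h1 : j < T i) (h2 : T i ≤ j') (h3 : j' < T i') :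
    ED i i' j j' = θ i j' := by
  have h4 : j < T i' := by omega
  rw [hED, did_eq_sub_treated_contributions hμ hPT]
  simp [hX, h2, h1.not_ge, h3.not_ge, h4.not_ge]

/-- Type 2: switch vs. always-untreated: under consistency, no anticipation, no spillover at the level of means, staggered adoption, and parallel trends, if j < T(i) ≤ j' < T(i'), then E[D_{i,i',j,j'}] = θ(i,j'). -/
theorem expn_did_type2
    (N J : ℕ) (hN : 1 ≤ N) (hJ : 1 ≤ J)
    (m0 m1 θ X μ : ℕ → ℕ → ℝ) (T : ℕ → ℕ) (ED : ℕ → ℕ → ℕ → ℕ → ℝ)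
    (hθ : ∀ i j, θ i j = m1 i j - m0 i j)
    (hT : ∀ i, 1 ≤ i → i ≤ N → 1 ≤ T i ∧ T i ≤ J + 1)
    (hX : ∀ i j, X i j = if T i ≤ j then 1 else 0)
    (hμ : ∀ i j, μ i j = m0 i j + θ i j * X i j)
    (hED : ∀ i i' j j', ED i i' j j' = (μ i j' - μ i j) - (μ i' j' - μ i' j))
    (hPT : ∀ i i' j j', m0 i j' - m0 i j = m0 i' j' - m0 i' j)
    (i i' j j' : ℕ)
    (hi : 1 ≤ i) (hiN : i ≤ N) (hi' : 1 ≤ i') (hi'N : i' ≤ N)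
    (hj : 1 ≤ j) (hjJ : j ≤ J) (hj' : 1 ≤ j') (hj'J : j' ≤ J)
    (h1 : j < T i) (h2 : T i ≤ j') (h3 : j' < T i') :
    ED i i' j j' = θ i j' :=
  expn_did_type2_general m0 θ X μ T ED hX hμ hED hPT i i' j j' h1 h2 h3
end

section
/- (Type 3: always-treated vs. always-untreated.) Under consistency, no anticipation, no spillover at the level of means, staggered adoption, and parallel trends, if units i, i' and periods j, j' satisfy T(i) ≤ j < j' < T(i'), then the expected two-by-two DID equals the difference of unit i's treatment effects across the two periods: E[D_{i,i',j,j'}] = θ(i,j') − θ(i,j). -/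
/-! Unit `i` is treated in both periods and unit `i'` in neither, so the two-by-two DID is the
difference of their untreated trends plus the change of `i`'s treatment effect; parallel trends
makes the first term vanish. -/

namespace DID

variable {ι τ : Type*} {m0 θ X μ : ι → τ → ℝ}

section StaggeredAdoption

variable [LinearOrder τ] {T : ι → τ} {i : ι} {j : τ}

theorem treatment_eq_one_of_le (hX : ∀ i j, X i j = if T i ≤ j then 1 else 0) (h : T i ≤ j) :
    X i j = 1 := by
  rw [hX, if_pos h]

theorem treatment_eq_zero_of_lt (hX : ∀ i j, X i j = if T i ≤ j then 1 else 0) (h : j < T i) :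
    X i j = 0 := by
  rw [hX, if_neg h.not_ge]

end StaggeredAdoption

theorem mean_change_of_treated (hμ : ∀ i j, μ i j = m0 i j + θ i j * X i j) {i : ι} {j j' : τ}
    (hj : X i j = 1) (hj' : X i j' = 1) :
    μ i j' - μ i j = (m0 i j' - m0 i j) + (θ i j' - θ i j) := by
  rw [hμ, hμ, hj, hj']
  ring

theorem mean_change_of_untreated (hμ : ∀ i j, μ i j = m0 i j + θ i j * X i j) {i : ι}
    {j j' : τ} (hj : X i j = 0) (hj' : X i j' = 0) :
    μ i j' - μ i j = m0 i j' - m0 i j := by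
  rw [hμ, hμ, hj, hj']
  ring

theorem did_eq_effect_change_of_treated_untreated
    (hμ : ∀ i j, μ i j = m0 i j + θ i j * X i j) {i i' : ι} {j j' : τ}
    (hPT : m0 i j' - m0 i j = m0 i' j' - m0 i' j)
    (hij : X i j = 1) (hij' : X i j' = 1) (hi'j : X i' j = 0) (hi'j' : X i' j' = 0) :
    (μ i j' - μ i j) - (μ i' j' - μ i' j) = θ i j' - θ i j := by
  rw [mean_change_of_treated hμ hij hij', mean_change_of_untreated hμ hi'j hi'j', hPT]
  ring

end DID

open DID in
theorem expn_did_type3_general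
    (m0 θ X μ : ℕ → ℕ → ℝ) (T : ℕ → ℕ) (ED : ℕ → ℕ → ℕ → ℕ → ℝ)
    (hX : ∀ i j, X i j = if T i ≤ j then 1 else 0)
    (hμ : ∀ i j, μ i j = m0 i j + θ i j * X i j)
    (hED : ∀ i i' j j', ED i i' j j' = (μ i j' - μ i j) - (μ i' j' - μ i' j))
    (hPT : ∀ i i' j j', m0 i j' - m0 i j = m0 i' j' - m0 i' j)
    (i i' j j' : ℕ)
    (h1 : T i ≤ j) (h2 : j < j') (h3 : j' < T i') :
    ED i i' j j' = θ i j' - θ i j := by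
  rw [hED]
  exact did_eq_effect_change_of_treated_untreated hμ (hPT i i' j j')
    (treatment_eq_one_of_le hX h1) (treatment_eq_one_of_le hX (h1.trans h2.le))
    (treatment_eq_zero_of_lt hX (h2.trans h3)) (treatment_eq_zero_of_lt hX h3)

/-- Type 3: always-treated vs. always-untreated: under consistency, no anticipation, no spillover at the level of means, staggered adoption, and parallel trends, if T(i) ≤ j < j' < T(i'), then E[D_{i,i',j,j'}] = θ(i,j') − θ(i,j). -/
theorem expn_did_type3
    (N J : ℕ) (hN : 1 ≤ N) (hJ : 1 ≤ J)
    (m0 m1 θ X μ : ℕ → ℕ → ℝ) (T : ℕ → ℕ) (ED : ℕ → ℕ → ℕ → ℕ → ℝ)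
    (hθ : ∀ i j, θ i j = m1 i j - m0 i j)
    (hT : ∀ i, 1 ≤ i → i ≤ N → 1 ≤ T i ∧ T i ≤ J + 1)
    (hX : ∀ i j, X i j = if T i ≤ j then 1 else 0)
    (hμ : ∀ i j, μ i j = m0 i j + θ i j * X i j)
    (hED : ∀ i i' j j', ED i i' j j' = (μ i j' - μ i j) - (μ i' j' - μ i' j))
    (hPT : ∀ i i' j j', m0 i j' - m0 i j = m0 i' j' - m0 i' j)
    (i i' j j' : ℕ)
    (hi : 1 ≤ i) (hiN : i ≤ N) (hi' : 1 ≤ i') (hi'N : i' ≤ N)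
    (hj : 1 ≤ j) (hjJ : j ≤ J) (hj' : 1 ≤ j') (hj'J : j' ≤ J)
    (h1 : T i ≤ j) (h2 : j < j') (h3 : j' < T i') :
    ED i i' j j' = θ i j' - θ i j :=
  expn_did_type3_general m0 θ X μ T ED hX hμ hED hPT i i' j j' h1 h2 h3
end

section
/- (Type 4: both switch.) Under consistency, no anticipation, no spillover at the level of means, staggered adoption, and parallel trends, if units i, i' and periods j, j' satisfy j < T(i), T(i) ≤ T(i'), and T(i') ≤ j', then the expected two-by-two DID equals the difference of the two units' treatment effects in period j': E[D_{i,i',j,j'}] = θ(i,j') − θ(i',j'). -/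
theorem did_eq_of_parallel_trends {R ι τ : Type*} [CommRing R] {m0 θ X μ : ι → τ → R}
    (hμ : ∀ i j, μ i j = m0 i j + θ i j * X i j) {i i' : ι} {j j' : τ}
    (hPT : m0 i j' - m0 i j = m0 i' j' - m0 i' j) :
    (μ i j' - μ i j) - (μ i' j' - μ i' j) =
      (θ i j' * X i j' - θ i j * X i j) - (θ i' j' * X i' j' - θ i' j * X i' j) := by
  simp only [hμ]
  linear_combination hPT

theorem expn_did_type4_general
    (m0 θ X μ : ℕ → ℕ → ℝ) (T : ℕ → ℕ) (ED : ℕ → ℕ → ℕ → ℕ → ℝ)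
    (hX : ∀ i j, X i j = if T i ≤ j then 1 else 0)
    (hμ : ∀ i j, μ i j = m0 i j + θ i j * X i j)
    (hED : ∀ i i' j j', ED i i' j j' = (μ i j' - μ i j) - (μ i' j' - μ i' j))
    (hPT : ∀ i i' j j', m0 i j' - m0 i j = m0 i' j' - m0 i' j)
    (i i' j j' : ℕ)
    (h1 : j < T i) (h2 : T i ≤ T i') (h3 : T i' ≤ j') :
    ED i i' j j' = θ i j' - θ i' j' := by
  rw [hED, did_eq_of_parallel_trends hμ (hPT i i' j j')]
  simp only [hX, if_neg h1.not_ge, if_neg (h1.trans_le h2).not_ge, if_pos (h2.trans h3), if_pos h3]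
  ring

/-- Type 4: both switch: under consistency, no anticipation, no spillover at the level of means, staggered adoption, and parallel trends, if j < T(i), T(i) ≤ T(i'), and T(i') ≤ j', then E[D_{i,i',j,j'}] = θ(i,j') − θ(i',j'). -/
theorem expn_did_type4
    (N J : ℕ) (hN : 1 ≤ N) (hJ : 1 ≤ J)
    (m0 m1 θ X μ : ℕ → ℕ → ℝ) (T : ℕ → ℕ) (ED : ℕ → ℕ → ℕ → ℕ → ℝ)
    (hθ : ∀ i j, θ i j = m1 i j - m0 i j)
    (hT : ∀ i, 1 ≤ i → i ≤ N → 1 ≤ T i ∧ T i ≤ J + 1)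
    (hX : ∀ i j, X i j = if T i ≤ j then 1 else 0)
    (hμ : ∀ i j, μ i j = m0 i j + θ i j * X i j)
    (hED : ∀ i i' j j', ED i i' j j' = (μ i j' - μ i j) - (μ i' j' - μ i' j))
    (hPT : ∀ i i' j j', m0 i j' - m0 i j = m0 i' j' - m0 i' j)
    (i i' j j' : ℕ)
    (hi : 1 ≤ i) (hiN : i ≤ N) (hi' : 1 ≤ i') (hi'N : i' ≤ N)
    (hj : 1 ≤ j) (hjJ : j ≤ J) (hj' : 1 ≤ j') (hj'J : j' ≤ J)
    (h1 : j < T i) (h2 : T i ≤ T i') (h3 : T i' ≤ j') :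
    ED i i' j j' = θ i j' - θ i' j' :=
  expn_did_type4_general m0 θ X μ T ED hX hμ hED hPT i i' j j' h1 h2 h3
end

section
/- (Type 6: both always-treated.) Under consistency, no anticipation, no spillover at the level of means, staggered adoption, and parallel trends, if units i, i' and periods j, j' satisfy T(i) ≤ T(i') ≤ j < j', then the expected two-by-two DID satisfies E[D_{i,i',j,j'}] = (θ(i,j') − θ(i,j)) − (θ(i',j') − θ(i',j)). In particular, if the treatment effect is the same for all units and periods, this expectation is zero. -/
/-! Both units are treated in both periods, so every observed mean is `m0 + θ`; parallel trends
cancels the `m0` part of the difference-in-differences, leaving the DID of the effects. -/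

lemma mean_eq_add_effect_of_treated {m0 θ X μ : ℕ → ℕ → ℝ} {T : ℕ → ℕ}
    (hX : ∀ i j, X i j = if T i ≤ j then 1 else 0)
    (hμ : ∀ i j, μ i j = m0 i j + θ i j * X i j) {i j : ℕ} (h : T i ≤ j) :
    μ i j = m0 i j + θ i j := by
  rw [hμ, hX, if_pos h, mul_one]

lemma did_add_eq_did_of_parallel_trends {m0 θ : ℕ → ℕ → ℝ}
    (hPT : ∀ i i' j j', m0 i j' - m0 i j = m0 i' j' - m0 i' j) (i i' j j' : ℕ) :
    ((m0 i j' + θ i j') - (m0 i j + θ i j)) - ((m0 i' j' + θ i' j') - (m0 i' j + θ i' j)) =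
      (θ i j' - θ i j) - (θ i' j' - θ i' j) := by
  linarith [hPT i i' j j']

theorem expn_did_type6_general
    (m0 θ X μ : ℕ → ℕ → ℝ) (T : ℕ → ℕ) (ED : ℕ → ℕ → ℕ → ℕ → ℝ)
    (hX : ∀ i j, X i j = if T i ≤ j then 1 else 0)
    (hμ : ∀ i j, μ i j = m0 i j + θ i j * X i j)
    (hED : ∀ i i' j j', ED i i' j j' = (μ i j' - μ i j) - (μ i' j' - μ i' j))
    (hPT : ∀ i i' j j', m0 i j' - m0 i j = m0 i' j' - m0 i' j)
    (i i' j j' : ℕ)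
    (h1 : T i ≤ T i') (h2 : T i' ≤ j) (h3 : j < j') :
    ED i i' j j' = (θ i j' - θ i j) - (θ i' j' - θ i' j) ∧ (∀ c : ℝ, (∀ a b, θ a b = c) → ED i i' j j' = 0) := by
  have treated : ∀ {k l}, T k ≤ l → μ k l = m0 k l + θ k l :=
    mean_eq_add_effect_of_treated hX hμ
  have key : ED i i' j j' = (θ i j' - θ i j) - (θ i' j' - θ i' j) := by
    rw [hED, treated (by omega : T i ≤ j'), treated (by omega : T i ≤ j),
      treated (by omega : T i' ≤ j'), treated h2]
    exact did_add_eq_did_of_parallel_trends hPT i i' j j'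
  refine ⟨key, fun c hc => ?_⟩
  rw [key, hc, hc, hc, hc]
  ring

/-- Type 6: both always-treated: under consistency, no anticipation, no spillover at the level of means, staggered adoption, and parallel trends, if T(i) ≤ T(i') ≤ j < j', then E[D_{i,i',j,j'}] = (θ(i,j') − θ(i,j)) − (θ(i',j') − θ(i',j)); in particular, if the treatment effect is the same for all units and periods, this expectation is zero. -/
theorem expn_did_type6
    (N J : ℕ) (hN : 1 ≤ N) (hJ : 1 ≤ J)
    (m0 m1 θ X μ : ℕ → ℕ → ℝ) (T : ℕ → ℕ) (ED : ℕ → ℕ → ℕ → ℕ → ℝ)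
    (hθ : ∀ i j, θ i j = m1 i j - m0 i j)
    (hT : ∀ i, 1 ≤ i → i ≤ N → 1 ≤ T i ∧ T i ≤ J + 1)
    (hX : ∀ i j, X i j = if T i ≤ j then 1 else 0)
    (hμ : ∀ i j, μ i j = m0 i j + θ i j * X i j)
    (hED : ∀ i i' j j', ED i i' j j' = (μ i j' - μ i j) - (μ i' j' - μ i' j))
    (hPT : ∀ i i' j j', m0 i j' - m0 i j = m0 i' j' - m0 i' j)
    (i i' j j' : ℕ)
    (hi : 1 ≤ i) (hiN : i ≤ N) (hi' : 1 ≤ i') (hi'N : i' ≤ N)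
    (hj : 1 ≤ j) (hjJ : j ≤ J) (hj' : 1 ≤ j') (hj'J : j' ≤ J)
    (h1 : T i ≤ T i') (h2 : T i' ≤ j) (h3 : j < j') :
    ED i i' j j' = (θ i j' - θ i j) - (θ i' j' - θ i' j) ∧ (∀ c : ℝ, (∀ a b, θ a b = c) → ED i i' j j' = 0) :=
  expn_did_type6_general m0 θ X μ T ED hX hμ hED hPT i i' j j' h1 h2 h3
end
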